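/- arXiv:2305.00578 — 12 statements merged into one kernel-verified Lean document; each statement's English description precedes it below -/
import Mathlib

section
/- Let m*, n* and N be real numbers with m* > 1, n* > 1 and N = m* + n*. For real Δ1, Δ2, set m = m* − Δ1 + Δ2 and n = n* + Δ1 − Δ2, and let k > 0, p11, p22 be real with p12 = 1 − p11 and p21 = 1 − p22. Define ER1 = p11·k·m*·(m*−Δ1)(m*−Δ1−1)/(m*(m*−1)) + p12·k·m*·(m*−Δ1)Δ2/(m*·n*) + p21·k·n*·(m*−Δ1)Δ2/(m*·n*) + p22·k·n*·Δ2(Δ2−1)/(n*(n*−1)) and ER2 = p22·k·n*·(n*−Δ2)(n*−Δ2−1)/(n*(n*−1)) + p21·k·n*·(n*−Δ2)Δ1/(n*·m*) + p12·k·m*·(n*−Δ2)Δ1/(n*·m*) + p11·k·m*·Δ1(Δ1−1)/(m*(m*−1)). Then ER1 − ER2 − k(m − n) = k·(p11·m* − p22·n* − (m* − n*))·(1 − Δ1/m* − Δ2/n*). -/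
/-- Factorization identity for `E₂(R_d(x)) − μ_d(x)` in the proof of Theorem 1:
`ER1 − ER2 − k(m − n) = k·(p11·m* − p22·n* − (m* − n*))·(1 − Δ1/m* − Δ2/n*)`. -/
theorem Ed_factorization
    (mstar nstar N : ℝ) (hm : 1 < mstar) (hn : 1 < nstar) (hN : N = mstar + nstar)
    (Δ1 Δ2 m n k p11 p22 p12 p21 ER1 ER2 : ℝ)
    (hmdef : m = mstar - Δ1 + Δ2) (hndef : n = nstar + Δ1 - Δ2)
    (hk : 0 < k) (hp12 : p12 = 1 - p11) (hp21 : p21 = 1 - p22)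
    (hER1 : ER1 =
        p11 * k * mstar * ((mstar - Δ1) * (mstar - Δ1 - 1)) / (mstar * (mstar - 1))
      + p12 * k * mstar * ((mstar - Δ1) * Δ2) / (mstar * nstar)
      + p21 * k * nstar * ((mstar - Δ1) * Δ2) / (mstar * nstar)
      + p22 * k * nstar * (Δ2 * (Δ2 - 1)) / (nstar * (nstar - 1)))
    (hER2 : ER2 =
        p22 * k * nstar * ((nstar - Δ2) * (nstar - Δ2 - 1)) / (nstar * (nstar - 1))
      + p21 * k * nstar * ((nstar - Δ2) * Δ1) / (nstar * mstar)
      + p12 * k * mstar * ((nstar - Δ2) * Δ1) / (nstar * mstar)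
      + p11 * k * mstar * (Δ1 * (Δ1 - 1)) / (mstar * (mstar - 1))) :
    ER1 - ER2 - k * (m - n) =
      k * (p11 * mstar - p22 * nstar - (mstar - nstar)) * (1 - Δ1 / mstar - Δ2 / nstar) := by
  have hm0 : mstar ≠ 0 := by linarith
  have hm1 : mstar - 1 ≠ 0 := by linarith
  have hn0 : nstar ≠ 0 := by linarith
  have hn1 : nstar - 1 ≠ 0 := by linarith
  subst hER1 hER2 hmdef hndef hp12 hp21
  field_simp
  ring
end

section
/- Let m*, n* and N be real numbers with m* > 1, n* > 1 and N = m* + n*. For real Δ1, Δ2, set m = m* − Δ1 + Δ2 and n = n* + Δ1 − Δ2 and define f_d(Δ1, Δ2) = (1 − Δ1/m* − Δ2/n*)/√(m·n). For any fixed Δ2 with 0 ≤ Δ2 ≤ n* and any Δ1 in [0, m*] at which m > 0 and n > 0, the partial derivative of f_d with respect to Δ1 exists and equals −(N/(2 m* n*))·((n* − Δ2)(m* − Δ1 + 2Δ2) + Δ1Δ2)/(m^{3/2} n^{3/2}), and this derivative is ≤ 0. -/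
/-- Partial derivative of the shape function
`f_d(Δ1, Δ2) = (1 − Δ1/m* − Δ2/n*)/√(m·n)` with respect to `Δ1`, where
`m = m* − Δ1 + Δ2` and `n = n* + Δ1 − Δ2`: it equals
`−(N/(2 m* n*))·((n* − Δ2)(m* − Δ1 + 2Δ2) + Δ1Δ2)/(m^{3/2} n^{3/2})` and is `≤ 0`. -/
theorem fd_deriv_delta1
    (mstar nstar N : ℝ) (hm : 1 < mstar) (hn : 1 < nstar) (hN : N = mstar + nstar)
    (Δ1 Δ2 : ℝ) (h2l : 0 ≤ Δ2) (h2u : Δ2 ≤ nstar) (h1l : 0 ≤ Δ1) (h1u : Δ1 ≤ mstar)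
    (hmpos : 0 < mstar - Δ1 + Δ2) (hnpos : 0 < nstar + Δ1 - Δ2) :
    HasDerivAt
      (fun t : ℝ =>
        (1 - t / mstar - Δ2 / nstar) / Real.sqrt ((mstar - t + Δ2) * (nstar + t - Δ2)))
      (-(N / (2 * mstar * nstar)) *
        (((nstar - Δ2) * (mstar - Δ1 + 2 * Δ2) + Δ1 * Δ2) /
          ((mstar - Δ1 + Δ2) ^ ((3 : ℝ) / 2) * (nstar + Δ1 - Δ2) ^ ((3 : ℝ) / 2))))
      Δ1
    ∧ -(N / (2 * mstar * nstar)) *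
        (((nstar - Δ2) * (mstar - Δ1 + 2 * Δ2) + Δ1 * Δ2) /
          ((mstar - Δ1 + Δ2) ^ ((3 : ℝ) / 2) * (nstar + Δ1 - Δ2) ^ ((3 : ℝ) / 2))) ≤ 0 := by
  have hm0 : (0:ℝ) < mstar := by linarith
  have hn0 : (0:ℝ) < nstar := by linarith
  have hg : 0 < (mstar - Δ1 + Δ2) * (nstar + Δ1 - Δ2) := mul_pos hmpos hnpos
  set s : ℝ := Real.sqrt ((mstar - Δ1 + Δ2) * (nstar + Δ1 - Δ2)) with hs_def
  have hs : 0 < s := Real.sqrt_pos.mpr hg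
  have hs2 : s ^ 2 = (mstar - Δ1 + Δ2) * (nstar + Δ1 - Δ2) := Real.sq_sqrt hg.le
  -- (m n)^{3/2} = s^3
  have h32 : (mstar - Δ1 + Δ2) ^ ((3 : ℝ) / 2) * (nstar + Δ1 - Δ2) ^ ((3 : ℝ) / 2)
      = s ^ 3 := by
    rw [← Real.mul_rpow hmpos.le hnpos.le, ← hs2, ← Real.rpow_natCast s 2,
      ← Real.rpow_mul hs.le, ← Real.rpow_natCast s 3]
    norm_num
  set P : ℝ := (nstar - Δ2) * (mstar - Δ1 + 2 * Δ2) + Δ1 * Δ2 with hP_def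
  set D : ℝ := -(N / (2 * mstar * nstar)) * (P / s ^ 3) with hD_def
  have hDeq : -(N / (2 * mstar * nstar)) *
      (((nstar - Δ2) * (mstar - Δ1 + 2 * Δ2) + Δ1 * Δ2) /
        ((mstar - Δ1 + Δ2) ^ ((3 : ℝ) / 2) * (nstar + Δ1 - Δ2) ^ ((3 : ℝ) / 2))) = D := by
    rw [h32]
  rw [hDeq]
  constructor
  · -- the derivative
    have hu : HasDerivAt (fun t : ℝ => 1 - t / mstar - Δ2 / nstar) (-(1 / mstar)) Δ1 := by
      simpa using (((hasDerivAt_id Δ1).div_const mstar).const_sub 1).sub_const (Δ2 / nstar)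
    have hA : HasDerivAt (fun t : ℝ => mstar - t + Δ2) (-1) Δ1 := by
      simpa using ((hasDerivAt_id Δ1).const_sub mstar).add_const Δ2
    have hB : HasDerivAt (fun t : ℝ => nstar + t - Δ2) 1 Δ1 := by
      simpa using ((hasDerivAt_id Δ1).const_add nstar).sub_const Δ2
    have hgd : HasDerivAt (fun t : ℝ => (mstar - t + Δ2) * (nstar + t - Δ2))
        ((-1) * (nstar + Δ1 - Δ2) + (mstar - Δ1 + Δ2) * 1) Δ1 := hA.mul hB
    have hsq : HasDerivAt (fun t : ℝ => Real.sqrt ((mstar - t + Δ2) * (nstar + t - Δ2)))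
        (1 / (2 * s) * ((-1) * (nstar + Δ1 - Δ2) + (mstar - Δ1 + Δ2) * 1)) Δ1 := by
      have := (Real.hasDerivAt_sqrt hg.ne').comp Δ1 hgd
      simpa [hs_def, mul_comm, Function.comp_def] using this
    have hdiv := hu.div hsq hs.ne'
    convert hdiv using 1
    · rfl
    · rfl
    · rfl
    -- show D equals the quotient-rule expression
    rw [hD_def]
    have hgd' : (-1) * (nstar + Δ1 - Δ2) + (mstar - Δ1 + Δ2) * 1
        = (mstar - Δ1 + Δ2) - (nstar + Δ1 - Δ2) := by ring
    rw [hgd']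
    have step1 : (-(1 / mstar) * s -
        (1 - Δ1 / mstar - Δ2 / nstar) *
          (1 / (2 * s) * ((mstar - Δ1 + Δ2) - (nstar + Δ1 - Δ2)))) / s ^ 2
        = (-(1 / mstar) * s ^ 2 -
            (1 - Δ1 / mstar - Δ2 / nstar) *
              (((mstar - Δ1 + Δ2) - (nstar + Δ1 - Δ2)) / 2)) / s ^ 3 := by
      field_simp
    rw [step1, hs2]
    have hnum : -(1 / mstar) * ((mstar - Δ1 + Δ2) * (nstar + Δ1 - Δ2)) -
        (1 - Δ1 / mstar - Δ2 / nstar) *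
          (((mstar - Δ1 + Δ2) - (nstar + Δ1 - Δ2)) / 2)
        = -(N / (2 * mstar * nstar)) * P := by
      rw [hN, hP_def]
      field_simp
      ring
    rw [hnum, mul_div_assoc]
  · -- the sign
    have hP0 : 0 ≤ P := by
      rw [hP_def]
      have : 0 ≤ (nstar - Δ2) * (mstar - Δ1 + 2 * Δ2) :=
        mul_nonneg (by linarith) (by linarith)
      nlinarith
    have hN0 : 0 < N := by rw [hN]; linarith
    have hfrac : 0 ≤ N / (2 * mstar * nstar) * (P / s ^ 3) :=
      mul_nonneg (div_nonneg hN0.le (by positivity)) (div_nonneg hP0 (by positivity))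
    rw [hD_def]
    nlinarith [hfrac]
end

section
/- Let m*, n* and N be real numbers with m* > 1, n* > 1 and N = m* + n*. For real Δ1, Δ2, set m = m* − Δ1 + Δ2 and n = n* + Δ1 − Δ2 and define f_d(Δ1, Δ2) = (1 − Δ1/m* − Δ2/n*)/√(m·n). For any fixed Δ1 with 0 ≤ Δ1 ≤ m* and any Δ2 in [0, n*] at which m > 0 and n > 0, the partial derivative of f_d with respect to Δ2 exists and equals −(N/(2 m* n*))·((m* − Δ1)(n* − Δ2 + 2Δ1) + Δ1Δ2)/(m^{3/2} n^{3/2}), and this derivative is ≤ 0. -/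
/-- Partial derivative of the shape function
`f_d(Δ1, Δ2) = (1 − Δ1/m* − Δ2/n*)/√(m·n)` with respect to `Δ2`, where
`m = m* − Δ1 + Δ2` and `n = n* + Δ1 − Δ2`: it equals
`−(N/(2 m* n*))·((m* − Δ1)(n* − Δ2 + 2Δ1) + Δ1Δ2)/(m^{3/2} n^{3/2})` and is `≤ 0`. -/
theorem fd_deriv_delta2
    (mstar nstar N : ℝ) (hm : 1 < mstar) (hn : 1 < nstar) (hN : N = mstar + nstar)
    (Δ1 Δ2 : ℝ) (h1l : 0 ≤ Δ1) (h1u : Δ1 ≤ mstar) (h2l : 0 ≤ Δ2) (h2u : Δ2 ≤ nstar)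
    (hmpos : 0 < mstar - Δ1 + Δ2) (hnpos : 0 < nstar + Δ1 - Δ2) :
    HasDerivAt
      (fun t : ℝ =>
        (1 - Δ1 / mstar - t / nstar) / Real.sqrt ((mstar - Δ1 + t) * (nstar + Δ1 - t)))
      (-(N / (2 * mstar * nstar)) *
        (((mstar - Δ1) * (nstar - Δ2 + 2 * Δ1) + Δ1 * Δ2) /
          ((mstar - Δ1 + Δ2) ^ ((3 : ℝ) / 2) * (nstar + Δ1 - Δ2) ^ ((3 : ℝ) / 2))))
      Δ2
    ∧ -(N / (2 * mstar * nstar)) *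
        (((mstar - Δ1) * (nstar - Δ2 + 2 * Δ1) + Δ1 * Δ2) /
          ((mstar - Δ1 + Δ2) ^ ((3 : ℝ) / 2) * (nstar + Δ1 - Δ2) ^ ((3 : ℝ) / 2))) ≤ 0 := by
  constructor
  · have hvpos : 0 < (mstar - Δ1 + Δ2) * (nstar + Δ1 - Δ2) := mul_pos hmpos hnpos
    have h1 : HasDerivAt (fun t : ℝ => mstar - Δ1 + t) 1 Δ2 := (hasDerivAt_id Δ2).const_add _
    have h2 : HasDerivAt (fun t : ℝ => nstar + Δ1 - t) (-1) Δ2 := (hasDerivAt_id Δ2).const_sub _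
    have hv : HasDerivAt (fun t : ℝ => (mstar - Δ1 + t) * (nstar + Δ1 - t))
        (1 * (nstar + Δ1 - Δ2) + (mstar - Δ1 + Δ2) * (-1)) Δ2 := h1.mul h2
    have hs : HasDerivAt (fun t : ℝ => Real.sqrt ((mstar - Δ1 + t) * (nstar + Δ1 - t)))
        (1 / (2 * Real.sqrt ((mstar - Δ1 + Δ2) * (nstar + Δ1 - Δ2))) *
          (1 * (nstar + Δ1 - Δ2) + (mstar - Δ1 + Δ2) * (-1))) Δ2 :=
      (Real.hasDerivAt_sqrt hvpos.ne').comp Δ2 hv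
    have hu : HasDerivAt (fun t : ℝ => 1 - Δ1 / mstar - t / nstar) (-(1 / nstar)) Δ2 := by
      simpa using (((hasDerivAt_id Δ2).div_const nstar).const_sub (1 - Δ1 / mstar))
    have hsne : Real.sqrt ((mstar - Δ1 + Δ2) * (nstar + Δ1 - Δ2)) ≠ 0 :=
      (Real.sqrt_pos.mpr hvpos).ne'
    have hdiv := hu.div hs hsne
    convert hdiv using 1
    case e'_4 => rfl
    case e'_5 => rfl
    case e'_8 => rfl
    subst hN
    have ha : 0 < Real.sqrt (mstar - Δ1 + Δ2) := Real.sqrt_pos.mpr hmpos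
    have hb : 0 < Real.sqrt (nstar + Δ1 - Δ2) := Real.sqrt_pos.mpr hnpos
    have ha2 : Real.sqrt (mstar - Δ1 + Δ2) ^ 2 = mstar - Δ1 + Δ2 := Real.sq_sqrt hmpos.le
    have hb2 : Real.sqrt (nstar + Δ1 - Δ2) ^ 2 = nstar + Δ1 - Δ2 := Real.sq_sqrt hnpos.le
    have hr1 : (mstar - Δ1 + Δ2) ^ ((3:ℝ)/2)
        = (mstar - Δ1 + Δ2) * Real.sqrt (mstar - Δ1 + Δ2) := by
      rw [show (3:ℝ)/2 = 1 + 1/2 by norm_num, Real.rpow_add hmpos, Real.rpow_one,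
        ← Real.sqrt_eq_rpow]
    have hr2 : (nstar + Δ1 - Δ2) ^ ((3:ℝ)/2)
        = (nstar + Δ1 - Δ2) * Real.sqrt (nstar + Δ1 - Δ2) := by
      rw [show (3:ℝ)/2 = 1 + 1/2 by norm_num, Real.rpow_add hnpos, Real.rpow_one,
        ← Real.sqrt_eq_rpow]
    rw [hr1, hr2, Real.sqrt_mul hmpos.le]
    set a := Real.sqrt (mstar - Δ1 + Δ2) with hadef
    set b := Real.sqrt (nstar + Δ1 - Δ2) with hbdef
    have hm0 : mstar ≠ 0 := by linarith
    have hn0 : nstar ≠ 0 := by linarith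
    field_simp
    rw [ha2, hb2]
    ring
  · have hA : 0 ≤ (mstar - Δ1) * (nstar - Δ2 + 2 * Δ1) + Δ1 * Δ2 := by
      have : 0 ≤ (mstar - Δ1) * (nstar - Δ2 + 2 * Δ1) :=
        mul_nonneg (by linarith) (by linarith)
      nlinarith [mul_nonneg h1l h2l]
    have hNpos : 0 < N := by rw [hN]; linarith
    have hden : 0 < (mstar - Δ1 + Δ2) ^ ((3 : ℝ) / 2) * (nstar + Δ1 - Δ2) ^ ((3 : ℝ) / 2) :=
      mul_pos (Real.rpow_pos_of_pos hmpos _) (Real.rpow_pos_of_pos hnpos _)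
    have hc : 0 < N / (2 * mstar * nstar) := by
      apply div_pos hNpos; nlinarith
    have := mul_nonneg hc.le (div_nonneg hA hden.le)
    linarith
end

section
/- Let m*, n* and N be real numbers with m* > 1, n* > 1 and N = m* + n*, and let k > 0 and p11, p22 be real numbers satisfying p11 > (m* − 1)/(N − 1) and p22 < (n* − 1)/(N − 1). For real Δ1, Δ2, set m = m* − Δ1 + Δ2 and n = n* + Δ1 − Δ2 and define f_d(Δ1, Δ2) = (1 − Δ1/m* − Δ2/n*)/√(m·n). Then for every (Δ1, Δ2) with 0 ≤ Δ1 ≤ m*, 0 ≤ Δ2 ≤ n*, m > 0 and n > 0, k·(p11·m* − p22·n* − (m* − n*))·f_d(Δ1, Δ2) ≤ k·(p11·m* − p22·n* − (m* − n*))·f_d(0, 0); that is, the function is maximized at (Δ1, Δ2) = (0, 0). -/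
/-- Scenario (2) of Theorem 1: under `p11 > (m*−1)/(N−1)` and `p22 < (n*−1)/(N−1)`,
the quantity `k·(p11·m* − p22·n* − (m* − n*))·f_d(Δ1, Δ2)` is maximized over the box
`[0, m*] × [0, n*]` at `(Δ1, Δ2) = (0, 0)`, i.e. at the true labeling `x = x*`. -/
theorem Zd_maximized_at_true_labeling
    (mstar nstar N k p11 p22 : ℝ)
    (hm : 1 < mstar) (hn : 1 < nstar) (hN : N = mstar + nstar) (hk : 0 < k)
    (h11 : p11 > (mstar - 1) / (N - 1)) (h22 : p22 < (nstar - 1) / (N - 1))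
    (fd : ℝ → ℝ → ℝ)
    (hfd : ∀ Δ1 Δ2 : ℝ, fd Δ1 Δ2 =
      (1 - Δ1 / mstar - Δ2 / nstar) /
        Real.sqrt ((mstar - Δ1 + Δ2) * (nstar + Δ1 - Δ2))) :
    ∀ Δ1 Δ2 : ℝ, 0 ≤ Δ1 → Δ1 ≤ mstar → 0 ≤ Δ2 → Δ2 ≤ nstar →
      0 < mstar - Δ1 + Δ2 → 0 < nstar + Δ1 - Δ2 →
      k * (p11 * mstar - p22 * nstar - (mstar - nstar)) * fd Δ1 Δ2 ≤
        k * (p11 * mstar - p22 * nstar - (mstar - nstar)) * fd 0 0 := by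
  intro Δ1 Δ2 hd1 hd1' hd2 hd2' hmpos hnpos
  have hms : 0 < mstar := by linarith
  have hns : 0 < nstar := by linarith
  have hN1 : 0 < N - 1 := by rw [hN]; linarith
  -- Positivity of the coefficient C
  have h1' : mstar - 1 < p11 * (N - 1) := (div_lt_iff₀ hN1).mp h11
  have h2' : p22 * (N - 1) < nstar - 1 := (lt_div_iff₀ hN1).mp h22
  have hC : 0 < p11 * mstar - p22 * nstar - (mstar - nstar) := by
    nlinarith [mul_lt_mul_of_pos_left h1' hms, mul_lt_mul_of_pos_left h2' hns, hN1, hN]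
  -- fd at the true labeling
  have hfd00 : fd 0 0 = 1 / Real.sqrt (mstar * nstar) := by
    rw [hfd]; norm_num
  -- the key comparison of fd values
  have hmn : 0 < mstar * nstar := mul_pos hms hns
  have main : fd Δ1 Δ2 ≤ fd 0 0 := by
    rw [hfd, hfd00]
    set t : ℝ := 1 - Δ1 / mstar - Δ2 / nstar with ht
    by_cases htpos : t ≤ 0
    · have hle : t / Real.sqrt ((mstar - Δ1 + Δ2) * (nstar + Δ1 - Δ2)) ≤ 0 :=
        div_nonpos_of_nonpos_of_nonneg htpos (Real.sqrt_nonneg _)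
      have : (0:ℝ) ≤ 1 / Real.sqrt (mstar * nstar) := by positivity
      linarith
    · push_neg at htpos
      have hprod : 0 < (mstar - Δ1 + Δ2) * (nstar + Δ1 - Δ2) := mul_pos hmpos hnpos
      rw [div_le_div_iff₀ (Real.sqrt_pos.mpr hprod) (Real.sqrt_pos.mpr hmn)]
      have hte : t = (mstar * nstar - Δ1 * nstar - Δ2 * mstar) / (mstar * nstar) := by
        rw [ht]; field_simp
      have key2 : (mstar * nstar - Δ1 * nstar - Δ2 * mstar) ^ 2 ≤
          ((mstar - Δ1 + Δ2) * (nstar + Δ1 - Δ2)) * (mstar * nstar) := by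
        nlinarith [mul_nonneg (mul_nonneg (mul_nonneg hms.le hns.le) hd1)
            (sub_nonneg.mpr hd1'),
          mul_nonneg (mul_nonneg (mul_nonneg hms.le hns.le) hd2)
            (sub_nonneg.mpr hd2'),
          mul_nonneg (mul_nonneg (mul_nonneg hd1 hns.le) hns.le)
            (sub_nonneg.mpr hd1'),
          mul_nonneg (mul_nonneg (mul_nonneg hd2 hms.le) hms.le)
            (sub_nonneg.mpr hd2')]
      have key : t ^ 2 * (mstar * nstar) ≤ (mstar - Δ1 + Δ2) * (nstar + Δ1 - Δ2) := by
        rw [hte, div_pow, div_mul_eq_mul_div,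
          div_le_iff₀ (by positivity : (0:ℝ) < (mstar * nstar) ^ 2)]
        nlinarith [mul_le_mul_of_nonneg_right key2 hmn.le]
      calc t * Real.sqrt (mstar * nstar)
          = Real.sqrt (t ^ 2 * (mstar * nstar)) := by
            rw [Real.sqrt_mul (sq_nonneg t), Real.sqrt_sq htpos.le]
        _ ≤ Real.sqrt ((mstar - Δ1 + Δ2) * (nstar + Δ1 - Δ2)) := Real.sqrt_le_sqrt key
        _ = 1 * Real.sqrt ((mstar - Δ1 + Δ2) * (nstar + Δ1 - Δ2)) := (one_mul _).symm
  have hCk : 0 ≤ k * (p11 * mstar - p22 * nstar - (mstar - nstar)) :=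
    (mul_pos hk hC).le
  calc k * (p11 * mstar - p22 * nstar - (mstar - nstar)) * fd Δ1 Δ2
      ≤ k * (p11 * mstar - p22 * nstar - (mstar - nstar)) * fd 0 0 :=
        mul_le_mul_of_nonneg_left main hCk
end

section
/- Let m*, n* and N be real numbers with m* > 1, n* > 1 and N = m* + n*, and let k > 0 and p11, p22 be real numbers satisfying p11 < (m* − 1)/(N − 1) and p22 > (n* − 1)/(N − 1). For real Δ1, Δ2, set m = m* − Δ1 + Δ2 and n = n* + Δ1 − Δ2 and define f_d(Δ1, Δ2) = (1 − Δ1/m* − Δ2/n*)/√(m·n). Then for every (Δ1, Δ2) with 0 ≤ Δ1 ≤ m*, 0 ≤ Δ2 ≤ n*, m > 0 and n > 0, k·(p11·m* − p22·n* − (m* − n*))·f_d(Δ1, Δ2) ≤ k·(p11·m* − p22·n* − (m* − n*))·f_d(m*, n*); that is, the function is maximized at (Δ1, Δ2) = (m*, n*). -/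
/-- Scenario (3) of Theorem 1: under `p11 < (m*−1)/(N−1)` and `p22 > (n*−1)/(N−1)`,
the quantity `k·(p11·m* − p22·n* − (m* − n*))·f_d(Δ1, Δ2)` is maximized over the box
`[0, m*] × [0, n*]` at `(Δ1, Δ2) = (m*, n*)`, i.e. at the flipped labeling `x = 1 − x*`. -/
theorem Zd_maximized_at_flipped_labeling
    (mstar nstar N k p11 p22 : ℝ)
    (hm : 1 < mstar) (hn : 1 < nstar) (hN : N = mstar + nstar) (hk : 0 < k)
    (h11 : p11 < (mstar - 1) / (N - 1)) (h22 : p22 > (nstar - 1) / (N - 1))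
    (fd : ℝ → ℝ → ℝ)
    (hfd : ∀ Δ1 Δ2 : ℝ, fd Δ1 Δ2 =
      (1 - Δ1 / mstar - Δ2 / nstar) /
        Real.sqrt ((mstar - Δ1 + Δ2) * (nstar + Δ1 - Δ2))) :
    ∀ Δ1 Δ2 : ℝ, 0 ≤ Δ1 → Δ1 ≤ mstar → 0 ≤ Δ2 → Δ2 ≤ nstar →
      0 < mstar - Δ1 + Δ2 → 0 < nstar + Δ1 - Δ2 →
      k * (p11 * mstar - p22 * nstar - (mstar - nstar)) * fd Δ1 Δ2 ≤
        k * (p11 * mstar - p22 * nstar - (mstar - nstar)) * fd mstar nstar := by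
  intro Δ1 Δ2 h1 h2 h3 h4 hmpos hnpos
  have hm0 : (0:ℝ) < mstar := by linarith
  have hn0 : (0:ℝ) < nstar := by linarith
  have hd : (0:ℝ) < N - 1 := by rw [hN]; linarith
  -- the coefficient is negative
  have h11' : p11 * (N - 1) < mstar - 1 := (lt_div_iff₀ hd).mp h11
  have h22' : nstar - 1 < p22 * (N - 1) := (div_lt_iff₀ hd).mp h22
  have hC : p11 * mstar - p22 * nstar - (mstar - nstar) < 0 := by
    have key : (p11 * mstar - p22 * nstar - (mstar - nstar)) * (N - 1) < 0 := by
      have e1 : p11 * (N - 1) * mstar < (mstar - 1) * mstar :=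
        mul_lt_mul_of_pos_right h11' hm0
      have e2 : (nstar - 1) * nstar < p22 * (N - 1) * nstar :=
        mul_lt_mul_of_pos_right h22' hn0
      have hNe : N - 1 = mstar + nstar - 1 := by rw [hN]
      nlinarith [e1, e2]
    nlinarith [key, hd]
  have hkC : k * (p11 * mstar - p22 * nstar - (mstar - nstar)) ≤ 0 :=
    mul_nonpos_of_nonneg_of_nonpos hk.le hC.le
  -- value at the flipped labeling
  have hsq0 : (0:ℝ) < Real.sqrt (nstar * mstar) :=
    Real.sqrt_pos.mpr (mul_pos hn0 hm0)
  have hfdmn : fd mstar nstar = -1 / Real.sqrt (nstar * mstar) := by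
    rw [hfd]
    have : mstar - mstar + nstar = nstar := by ring
    rw [this]
    have : nstar + mstar - nstar = mstar := by ring
    rw [this]
    rw [div_self hm0.ne', div_self hn0.ne']
    norm_num
  -- fd Δ1 Δ2 ≥ -1/√(n* m*)
  have hsq1 : (0:ℝ) < Real.sqrt ((mstar - Δ1 + Δ2) * (nstar + Δ1 - Δ2)) :=
    Real.sqrt_pos.mpr (mul_pos hmpos hnpos)
  have hmain : -1 / Real.sqrt (nstar * mstar) ≤ fd Δ1 Δ2 := by
    rw [hfd]
    set E := 1 - Δ1 / mstar - Δ2 / nstar with hE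
    rcases le_or_gt 0 E with hE0 | hE0
    · have : (0:ℝ) ≤ E / Real.sqrt ((mstar - Δ1 + Δ2) * (nstar + Δ1 - Δ2)) :=
        div_nonneg hE0 hsq1.le
      have hneg : -1 / Real.sqrt (nstar * mstar) ≤ 0 :=
        div_nonpos_of_nonpos_of_nonneg (by norm_num) hsq0.le
      linarith
    · -- E < 0 : square the inequality
      have hEval : E = (mstar * nstar - Δ1 * nstar - Δ2 * mstar) / (mstar * nstar) := by
        rw [hE]; field_simp
      have hXY : mstar * nstar - Δ1 * nstar - Δ2 * mstar ≤ 0 := by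
        by_contra hc
        push_neg at hc
        have : 0 ≤ E := by rw [hEval]; exact div_nonneg hc.le (mul_pos hm0 hn0).le
        linarith
      -- key algebraic inequality: E^2 * (n* m*) ≤ m n
      have hkey : E ^ 2 * (nstar * mstar) ≤ (mstar - Δ1 + Δ2) * (nstar + Δ1 - Δ2) := by
        have step1 : (Δ1 * nstar + Δ2 * mstar - mstar * nstar) ^ 2 ≤
            (Δ1 * nstar) * (Δ2 * mstar) := by
          nlinarith [hXY, mul_nonneg h1 hn0.le, mul_nonneg h3 hm0.le,
            mul_le_mul_of_nonneg_left h2 hn0.le, mul_le_mul_of_nonneg_left h4 hm0.le]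
        have step2 : Δ1 * Δ2 ≤ (mstar - Δ1 + Δ2) * (nstar + Δ1 - Δ2) := by
          nlinarith [mul_nonneg h1 h3]
        have hE2 : E ^ 2 * (nstar * mstar) =
            (Δ1 * nstar + Δ2 * mstar - mstar * nstar) ^ 2 / (mstar * nstar) := by
          rw [hEval]; field_simp; ring
        rw [hE2]
        rw [div_le_iff₀ (mul_pos hm0 hn0)]
        calc (Δ1 * nstar + Δ2 * mstar - mstar * nstar) ^ 2
            ≤ (Δ1 * nstar) * (Δ2 * mstar) := step1
          _ = Δ1 * Δ2 * (mstar * nstar) := by ring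
          _ ≤ (mstar - Δ1 + Δ2) * (nstar + Δ1 - Δ2) * (mstar * nstar) :=
              mul_le_mul_of_nonneg_right step2 (mul_pos hm0 hn0).le
      -- from squares to square roots
      have hsqle : (-E) * Real.sqrt (nstar * mstar) ≤
          Real.sqrt ((mstar - Δ1 + Δ2) * (nstar + Δ1 - Δ2)) := by
        have h0 : (-E) * Real.sqrt (nstar * mstar) = Real.sqrt (E ^ 2 * (nstar * mstar)) := by
          rw [Real.sqrt_mul (sq_nonneg E), Real.sqrt_sq_eq_abs, abs_of_neg hE0]
        rw [h0]
        exact Real.sqrt_le_sqrt hkey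
      rw [div_le_div_iff₀ hsq0 hsq1]
      linarith [hsqle]
  rw [hfdmn]
  calc k * (p11 * mstar - p22 * nstar - (mstar - nstar)) * fd Δ1 Δ2
      ≤ k * (p11 * mstar - p22 * nstar - (mstar - nstar)) * (-1 / Real.sqrt (nstar * mstar)) := by
        rw [mul_comm _ (fd Δ1 Δ2), mul_comm _ (-1 / Real.sqrt (nstar * mstar))]
        exact mul_le_mul_of_nonpos_right hmain hkC
    _ = _ := rfl
end

section
/- Let m*, n* and N be real numbers with m* > 1, n* > 1 and N = m* + n*. For real Δ1, Δ2, set m = m* − Δ1 + Δ2 and n = n* + Δ1 − Δ2 and define f̃_d(Δ1, Δ2) = (1 − Δ1/(m* − 1) − Δ2/(n* − 1))/√((m − 1)(n − 1)). Then for all (Δ1, Δ2) with 0 ≤ Δ1 ≤ m* − 1, 0 ≤ Δ2 ≤ n* − 1, m − 1 > 0 and n − 1 > 0, one has −1/√((m* − 1)(n* − 1)) ≤ f̃_d(Δ1, Δ2) ≤ 1/√((m* − 1)(n* − 1)); moreover f̃_d(0, 0) = 1/√((m* − 1)(n* − 1)) and f̃_d(m* − 1, n* − 1) = −1/√((m*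 − 1)(n* − 1)). -/
/-- Extremal bounds for the auxiliary shape function
`f̃_d(Δ1, Δ2) = (1 − Δ1/(m*−1) − Δ2/(n*−1))/√((m−1)(n−1))` with
`m = m* − Δ1 + Δ2`, `n = n* + Δ1 − Δ2`: on the box `[0, m*−1] × [0, n*−1]`
(where `m − 1, n − 1 > 0`) it lies in `[−1/√((m*−1)(n*−1)), 1/√((m*−1)(n*−1))]`,
with `f̃_d(0,0) = 1/√((m*−1)(n*−1))` and `f̃_d(m*−1, n*−1) = −1/√((m*−1)(n*−1))`. -/
theorem fd_tilde_extremal_bounds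
    (mstar nstar N : ℝ) (hm : 1 < mstar) (hn : 1 < nstar) (hN : N = mstar + nstar)
    (fdt : ℝ → ℝ → ℝ)
    (hfdt : ∀ Δ1 Δ2 : ℝ, fdt Δ1 Δ2 =
      (1 - Δ1 / (mstar - 1) - Δ2 / (nstar - 1)) /
        Real.sqrt ((mstar - Δ1 + Δ2 - 1) * (nstar + Δ1 - Δ2 - 1))) :
    (∀ Δ1 Δ2 : ℝ, 0 ≤ Δ1 → Δ1 ≤ mstar - 1 → 0 ≤ Δ2 → Δ2 ≤ nstar - 1 →
      0 < mstar - Δ1 + Δ2 - 1 → 0 < nstar + Δ1 - Δ2 - 1 →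
      -(1 / Real.sqrt ((mstar - 1) * (nstar - 1))) ≤ fdt Δ1 Δ2 ∧
        fdt Δ1 Δ2 ≤ 1 / Real.sqrt ((mstar - 1) * (nstar - 1)))
    ∧ fdt 0 0 = 1 / Real.sqrt ((mstar - 1) * (nstar - 1))
    ∧ fdt (mstar - 1) (nstar - 1) = -(1 / Real.sqrt ((mstar - 1) * (nstar - 1))) := by
  have ha : (0:ℝ) < mstar - 1 := by linarith
  have hb : (0:ℝ) < nstar - 1 := by linarith
  set a := mstar - 1 with ha'
  set b := nstar - 1 with hb'
  have hab : (0:ℝ) < a * b := mul_pos ha hb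
  have hr : (0:ℝ) < Real.sqrt (a * b) := Real.sqrt_pos.2 hab
  refine ⟨?_, ?_, ?_⟩
  · intro x y hx hxa hy hyb hD1 hD2
    have hD : (0:ℝ) < (mstar - x + y - 1) * (nstar + x - y - 1) := mul_pos hD1 hD2
    have hs : (0:ℝ) < Real.sqrt ((mstar - x + y - 1) * (nstar + x - y - 1)) :=
      Real.sqrt_pos.2 hD
    have hs2 : (Real.sqrt ((mstar - x + y - 1) * (nstar + x - y - 1)))^2
        = (mstar - x + y - 1) * (nstar + x - y - 1) := Real.sq_sqrt hD.le
    have hr2 : (Real.sqrt (a * b))^2 = a * b := Real.sq_sqrt hab.le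
    set g : ℝ := 1 - x / a - y / b with hg
    -- key: g^2 * (a*b) ≤ D
    have hge : g = (a * b - b * x - a * y) / (a * b) := by
      rw [hg]; field_simp
    have key : g^2 * (a * b) ≤ (mstar - x + y - 1) * (nstar + x - y - 1) := by
      rw [hge]
      rw [div_pow, div_mul_eq_mul_div, div_le_iff₀ (by positivity)]
      have h1 : 0 ≤ x * (a - x) := mul_nonneg hx (by linarith)
      have h2 : 0 ≤ y * (b - y) := mul_nonneg hy (by linarith)
      have hD' : mstar - x + y - 1 = a - x + y := by rw [ha']; ring
      have hD'' : nstar + x - y - 1 = b + x - y := by rw [hb']; ring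
      rw [hD', hD'']
      nlinarith only [mul_nonneg hab.le (mul_nonneg (mul_nonneg hb.le hb.le) h1),
        mul_nonneg hab.le (mul_nonneg (mul_nonneg ha.le ha.le) h2),
        mul_nonneg hab.le (mul_nonneg hab.le h1), mul_nonneg hab.le (mul_nonneg hab.le h2)]
    have heq : |g| * Real.sqrt (a * b) = Real.sqrt (g^2 * (a * b)) := by
      rw [Real.sqrt_mul (sq_nonneg g), Real.sqrt_sq_eq_abs]
    have habs : |g| * Real.sqrt (a * b)
        ≤ Real.sqrt ((mstar - x + y - 1) * (nstar + x - y - 1)) := by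
      rw [heq]; exact Real.sqrt_le_sqrt key
    have hbound1 : g * Real.sqrt (a * b)
        ≤ Real.sqrt ((mstar - x + y - 1) * (nstar + x - y - 1)) :=
      le_trans (mul_le_mul_of_nonneg_right (le_abs_self g) hr.le) habs
    have hbound2 : -Real.sqrt ((mstar - x + y - 1) * (nstar + x - y - 1))
        ≤ g * Real.sqrt (a * b) := by
      have := mul_le_mul_of_nonneg_right (neg_abs_le g) hr.le
      have h2 : -(|g| * Real.sqrt (a * b)) = -|g| * Real.sqrt (a * b) := by ring
      linarith [habs]
    rw [hfdt]
    constructor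
    · rw [show -(1 / Real.sqrt (a * b)) = (-1) / Real.sqrt (a * b) by ring,
        div_le_div_iff₀ hr hs, ← hg]
      linarith
    · rw [← hg, div_le_div_iff₀ hs hr]
      linarith
  · rw [hfdt]
    norm_num
    rfl
  · rw [hfdt]
    have e1 : mstar - (mstar - 1) + (nstar - 1) - 1 = b := by rw [hb']; ring
    have e2 : nstar + (mstar - 1) - (nstar - 1) - 1 = a := by rw [ha']; ring
    rw [e1, e2, mul_comm b a]
    have : 1 - (mstar - 1) / a - (nstar - 1) / b = -1 := by
      rw [ha', hb']
      rw [div_self (show (0:ℝ) < mstar - 1 by linarith).ne',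
        div_self (show (0:ℝ) < nstar - 1 by linarith).ne']
      norm_num
    rw [this]; ring
end

section
/- Let m*, n* and N be real numbers with m* > 1, n* > 1 and N = m* + n*. For real Δ1, Δ2, set m = m* − Δ1 + Δ2 and n = n* + Δ1 − Δ2, and define f_d(Δ1, Δ2) = (1 − Δ1/m* − Δ2/n*)/√(m·n), f̃_d(Δ1, Δ2) = (1 − Δ1/(m* − 1) − Δ2/(n* − 1))/√((m − 1)(n − 1)), h(Δ1, Δ2) = ((N − 2)·Δ1·Δ2/(m*·n*·(m* − 1)·(n* − 1)))/√(m·n·(m − 1)·(n − 1)), and f_w(Δ1, Δ2) = (1 + Δ1²/(m*(m* − 1)) + Δ2²/(n*(n* − 1)) + 2Δ1Δ2/(m*·n*) − (2m* − 1)Δ1/(m*(m* − 1)) − (2n* − 1)Δ2/(n*(n* − 1)))/√(m·n·(m − 1)·(n − 1)). Then for every (Δ1, Δ2) with m > 1 and n > 1, f_w(Δ1, Δ2) = f_d(Δ1, Δ2)·f̃_d(Δ1, Δ2) − h(Δ1, Δ2). -/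
/-- Decomposition identity in the proof of Theorem 1:
`f_w(Δ1, Δ2) = f_d(Δ1, Δ2)·f̃_d(Δ1, Δ2) − h(Δ1, Δ2)` whenever `m > 1` and `n > 1`,
where `m = m* − Δ1 + Δ2` and `n = n* + Δ1 − Δ2`. -/
theorem fw_decomposition
    (mstar nstar N : ℝ) (hm : 1 < mstar) (hn : 1 < nstar) (hN : N = mstar + nstar)
    (fd fdt h fw : ℝ → ℝ → ℝ)
    (hfd : ∀ Δ1 Δ2 : ℝ, fd Δ1 Δ2 =
      (1 - Δ1 / mstar - Δ2 / nstar) /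
        Real.sqrt ((mstar - Δ1 + Δ2) * (nstar + Δ1 - Δ2)))
    (hfdt : ∀ Δ1 Δ2 : ℝ, fdt Δ1 Δ2 =
      (1 - Δ1 / (mstar - 1) - Δ2 / (nstar - 1)) /
        Real.sqrt ((mstar - Δ1 + Δ2 - 1) * (nstar + Δ1 - Δ2 - 1)))
    (hh : ∀ Δ1 Δ2 : ℝ, h Δ1 Δ2 =
      ((N - 2) * Δ1 * Δ2 / (mstar * nstar * (mstar - 1) * (nstar - 1))) /
        Real.sqrt ((mstar - Δ1 + Δ2) * (nstar + Δ1 - Δ2) *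
          (mstar - Δ1 + Δ2 - 1) * (nstar + Δ1 - Δ2 - 1)))
    (hfw : ∀ Δ1 Δ2 : ℝ, fw Δ1 Δ2 =
      (1 + Δ1 ^ 2 / (mstar * (mstar - 1)) + Δ2 ^ 2 / (nstar * (nstar - 1))
        + 2 * Δ1 * Δ2 / (mstar * nstar)
        - (2 * mstar - 1) * Δ1 / (mstar * (mstar - 1))
        - (2 * nstar - 1) * Δ2 / (nstar * (nstar - 1))) /
        Real.sqrt ((mstar - Δ1 + Δ2) * (nstar + Δ1 - Δ2) *
          (mstar - Δ1 + Δ2 - 1) * (nstar + Δ1 - Δ2 - 1))) :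
    ∀ Δ1 Δ2 : ℝ, 1 < mstar - Δ1 + Δ2 → 1 < nstar + Δ1 - Δ2 →
      fw Δ1 Δ2 = fd Δ1 Δ2 * fdt Δ1 Δ2 - h Δ1 Δ2 := by
  intro Δ1 Δ2 hm1 hn1
  have hmm0 : (0:ℝ) < mstar - Δ1 + Δ2 := by linarith
  have hnn0 : (0:ℝ) < nstar + Δ1 - Δ2 := by linarith
  have hmm1 : (0:ℝ) < mstar - Δ1 + Δ2 - 1 := by linarith
  have hnn1 : (0:ℝ) < nstar + Δ1 - Δ2 - 1 := by linarith
  have hm0 : (0:ℝ) < mstar := by linarith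
  have hn0 : (0:ℝ) < nstar := by linarith
  have hm1' : (0:ℝ) < mstar - 1 := by linarith
  have hn1' : (0:ℝ) < nstar - 1 := by linarith
  rw [hfd, hfdt, hh, hfw]
  have hs1 : (0:ℝ) < Real.sqrt ((mstar - Δ1 + Δ2) * (nstar + Δ1 - Δ2)) :=
    Real.sqrt_pos.mpr (by positivity)
  have hs2 : (0:ℝ) < Real.sqrt ((mstar - Δ1 + Δ2 - 1) * (nstar + Δ1 - Δ2 - 1)) :=
    Real.sqrt_pos.mpr (by positivity)
  have hsplit : Real.sqrt ((mstar - Δ1 + Δ2) * (nstar + Δ1 - Δ2) *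
      (mstar - Δ1 + Δ2 - 1) * (nstar + Δ1 - Δ2 - 1)) =
      Real.sqrt ((mstar - Δ1 + Δ2) * (nstar + Δ1 - Δ2)) *
      Real.sqrt ((mstar - Δ1 + Δ2 - 1) * (nstar + Δ1 - Δ2 - 1)) := by
    rw [← Real.sqrt_mul (by positivity)]
    ring_nf
  rw [hsplit]
  rw [div_mul_div_comm, div_sub_div _ _ (by positivity) (by positivity)]
  rw [div_eq_div_iff (by positivity) (by positivity)]
  subst hN
  field_simp
  ring
end

section
/- Let m*, n* and N be real numbers with m* > 1, n* > 1 and N = m* + n*. For real Δ1, Δ2, set m = m* − Δ1 + Δ2 and n = n* + Δ1 − Δ2, and define h(Δ1, Δ2) = ((N − 2)·Δ1·Δ2/(m*·n*·(m* − 1)·(n* − 1)))/√(m·n·(m − 1)·(n − 1)) and f_w(Δ1, Δ2) = (1 + Δ1²/(m*(m* − 1)) + Δ2²/(n*(n* − 1)) + 2Δ1Δ2/(m*·n*) − (2m* − 1)Δ1/(m*(m* − 1)) − (2n* − 1)Δ2/(n*(n* − 1)))/√(m·n·(m − 1)·(n − 1)). Then h(Δ1, Δ2) > 0 whenever Δ1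 > 0, Δ2 > 0, m > 1 and n > 1; in particular f_w(m* − 1, n* − 1) < f_w(0, 0). -/
/-- Positivity of the correction term `h` in the decomposition `f_w = f_d·f̃_d − h`:
`h(Δ1, Δ2) > 0` whenever `Δ1 > 0`, `Δ2 > 0`, `m > 1` and `n > 1`; in particular
`f_w(m*−1, n*−1) < f_w(0, 0)`. -/
theorem h_positive_and_corner_strict
    (mstar nstar N : ℝ) (hm : 1 < mstar) (hn : 1 < nstar) (hN : N = mstar + nstar)
    (h fw : ℝ → ℝ → ℝ)
    (hh : ∀ Δ1 Δ2 : ℝ, h Δ1 Δ2 =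
      ((N - 2) * Δ1 * Δ2 / (mstar * nstar * (mstar - 1) * (nstar - 1))) /
        Real.sqrt ((mstar - Δ1 + Δ2) * (nstar + Δ1 - Δ2) *
          (mstar - Δ1 + Δ2 - 1) * (nstar + Δ1 - Δ2 - 1)))
    (hfw : ∀ Δ1 Δ2 : ℝ, fw Δ1 Δ2 =
      (1 + Δ1 ^ 2 / (mstar * (mstar - 1)) + Δ2 ^ 2 / (nstar * (nstar - 1))
        + 2 * Δ1 * Δ2 / (mstar * nstar)
        - (2 * mstar - 1) * Δ1 / (mstar * (mstar - 1))
        - (2 * nstar - 1) * Δ2 / (nstar * (nstar - 1))) /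
        Real.sqrt ((mstar - Δ1 + Δ2) * (nstar + Δ1 - Δ2) *
          (mstar - Δ1 + Δ2 - 1) * (nstar + Δ1 - Δ2 - 1))) :
    (∀ Δ1 Δ2 : ℝ, 0 < Δ1 → 0 < Δ2 → 1 < mstar - Δ1 + Δ2 → 1 < nstar + Δ1 - Δ2 →
      0 < h Δ1 Δ2)
    ∧ fw (mstar - 1) (nstar - 1) < fw 0 0 := by

  have hm0 : (0:ℝ) < mstar := lt_trans one_pos hm
  have hn0 : (0:ℝ) < nstar := lt_trans one_pos hn
  have hm1 : (0:ℝ) < mstar - 1 := by linarith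
  have hn1 : (0:ℝ) < nstar - 1 := by linarith
  constructor
  · intro Δ1 Δ2 h1 h2 hM hN2
    rw [hh]
    apply div_pos
    · apply div_pos
      · have : 0 < N - 2 := by rw [hN]; linarith
        positivity
      · positivity
    · apply Real.sqrt_pos.mpr
      have a1 : (0:ℝ) < mstar - Δ1 + Δ2 := by linarith
      have a2 : (0:ℝ) < nstar + Δ1 - Δ2 := by linarith
      have a3 : (0:ℝ) < mstar - Δ1 + Δ2 - 1 := by linarith
      have a4 : (0:ℝ) < nstar + Δ1 - Δ2 - 1 := by linarith
      positivity
  · rw [hfw, hfw]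
    have e1 : (mstar - (mstar - 1) + (nstar - 1)) * (nstar + (mstar - 1) - (nstar - 1)) *
        (mstar - (mstar - 1) + (nstar - 1) - 1) * (nstar + (mstar - 1) - (nstar - 1) - 1)
        = mstar * nstar * (mstar - 1) * (nstar - 1) := by ring
    have e2 : (mstar - 0 + 0) * (nstar + 0 - 0) * (mstar - 0 + 0 - 1) * (nstar + 0 - 0 - 1)
        = mstar * nstar * (mstar - 1) * (nstar - 1) := by ring
    rw [e1, e2]
    have hS : 0 < Real.sqrt (mstar * nstar * (mstar - 1) * (nstar - 1)) := by
      apply Real.sqrt_pos.mpr; positivity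
    apply div_lt_div_of_pos_right ?_ hS
    have hmm : mstar * (mstar - 1) ≠ 0 := by positivity
    have hnn : nstar * (nstar - 1) ≠ 0 := by positivity
    have hmn : mstar * nstar ≠ 0 := by positivity
    have lhs_eq : 1 + (mstar - 1) ^ 2 / (mstar * (mstar - 1)) + (nstar - 1) ^ 2 / (nstar * (nstar - 1)) +
          2 * (mstar - 1) * (nstar - 1) / (mstar * nstar) -
        (2 * mstar - 1) * (mstar - 1) / (mstar * (mstar - 1)) -
      (2 * nstar - 1) * (nstar - 1) / (nstar * (nstar - 1))
      = -1 + 2 * ((mstar - 1) * (nstar - 1)) / (mstar * nstar) := by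
      field_simp
      ring
    rw [lhs_eq]
    have hq : 2 * ((mstar - 1) * (nstar - 1)) / (mstar * nstar) < 2 := by
      rw [div_lt_iff₀ (by positivity)]
      nlinarith
    have : (0:ℝ) ^ 2 / (mstar * (mstar - 1)) = 0 := by simp
    norm_num
    linarith
end

section
/- Let m*, n* and N be real numbers with m* > 1, n* > 2 and N = m* + n*. For real Δ1, Δ2, set m = m* − Δ1 + Δ2 and n = n* + Δ1 − Δ2, and define f_w(Δ1, Δ2) = (1 + Δ1²/(m*(m* − 1)) + Δ2²/(n*(n* − 1)) + 2Δ1Δ2/(m*·n*) − (2m* − 1)Δ1/(m*(m* − 1)) − (2n* − 1)Δ2/(n*(n* − 1)))/√(m·n·(m − 1)·(n − 1)). Then f_w(m*, n* − 1) = √((1 − 2/n*)·(1 − 2/(m* + 1)))/√(m*·n*·(m* − 1)·(n* − 1)), and consequently f_w(m*, n* − 1) < f_w(0, 0). -/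
/-- Corner case `(Δ1, Δ2) = (m*, n* − 1)` in the proof of Theorem 1:
`f_w(m*, n*−1) = √((1 − 2/n*)(1 − 2/(m*+1)))/√(m*·n*·(m*−1)·(n*−1))`, and
consequently `f_w(m*, n*−1) < f_w(0, 0)`. -/
theorem fw_corner_m_nminus1
    (mstar nstar N : ℝ) (hm : 1 < mstar) (hn : 2 < nstar) (hN : N = mstar + nstar)
    (fw : ℝ → ℝ → ℝ)
    (hfw : ∀ Δ1 Δ2 : ℝ, fw Δ1 Δ2 =
      (1 + Δ1 ^ 2 / (mstar * (mstar - 1)) + Δ2 ^ 2 / (nstar * (nstar - 1))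
        + 2 * Δ1 * Δ2 / (mstar * nstar)
        - (2 * mstar - 1) * Δ1 / (mstar * (mstar - 1))
        - (2 * nstar - 1) * Δ2 / (nstar * (nstar - 1))) /
        Real.sqrt ((mstar - Δ1 + Δ2) * (nstar + Δ1 - Δ2) *
          (mstar - Δ1 + Δ2 - 1) * (nstar + Δ1 - Δ2 - 1))) :
    fw mstar (nstar - 1) =
      Real.sqrt ((1 - 2 / nstar) * (1 - 2 / (mstar + 1))) /
        Real.sqrt (mstar * nstar * (mstar - 1) * (nstar - 1))
    ∧ fw mstar (nstar - 1) < fw 0 0 := by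
  have hm0 : (0:ℝ) < mstar := by linarith
  have hm1 : (0:ℝ) < mstar - 1 := by linarith
  have hn0 : (0:ℝ) < nstar := by linarith
  have hn1 : (0:ℝ) < nstar - 1 := by linarith
  have hn2 : (0:ℝ) < nstar - 2 := by linarith
  have hmp1 : (0:ℝ) < mstar + 1 := by linarith
  have hP0 : (0:ℝ) ≤ 1 - 2 / nstar := by
    rw [sub_nonneg, div_le_one hn0]; linarith
  have hQ0 : (0:ℝ) ≤ 1 - 2 / (mstar + 1) := by
    rw [sub_nonneg, div_le_one hmp1]; linarith
  have hPQ0 : (0:ℝ) ≤ (1 - 2 / nstar) * (1 - 2 / (mstar + 1)) := mul_nonneg hP0 hQ0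
  -- simplify the numerator at (mstar, nstar - 1)
  have hnum : (1 + mstar ^ 2 / (mstar * (mstar - 1)) + (nstar - 1) ^ 2 / (nstar * (nstar - 1))
        + 2 * mstar * (nstar - 1) / (mstar * nstar)
        - (2 * mstar - 1) * mstar / (mstar * (mstar - 1))
        - (2 * nstar - 1) * (nstar - 1) / (nstar * (nstar - 1))) = (nstar - 2) / nstar := by
    field_simp
    ring
  -- the denominator radicand
  have hden : (mstar - mstar + (nstar - 1)) * (nstar + mstar - (nstar - 1)) *
      (mstar - mstar + (nstar - 1) - 1) * (nstar + mstar - (nstar - 1) - 1)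
      = (nstar - 1) * (mstar + 1) * (nstar - 2) * mstar := by ring
  have hDpos : (0:ℝ) < (nstar - 1) * (mstar + 1) * (nstar - 2) * mstar := by positivity
  have hD2pos : (0:ℝ) < mstar * nstar * (mstar - 1) * (nstar - 1) := by positivity
  have key : fw mstar (nstar - 1) =
      Real.sqrt ((1 - 2 / nstar) * (1 - 2 / (mstar + 1))) /
        Real.sqrt (mstar * nstar * (mstar - 1) * (nstar - 1)) := by
    rw [hfw, hnum, hden]
    rw [div_eq_div_iff (Real.sqrt_pos.mpr hDpos).ne' (Real.sqrt_pos.mpr hD2pos).ne']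
    have hq : (0:ℝ) ≤ (nstar - 2) / nstar := by positivity
    rw [show (nstar - 2) / nstar = Real.sqrt (((nstar - 2) / nstar)^2) from
      (Real.sqrt_sq hq).symm, ← Real.sqrt_mul (sq_nonneg ((nstar - 2) / nstar)),
      ← Real.sqrt_mul hPQ0]
    congr 1
    field_simp
    ring
  refine ⟨key, ?_⟩
  rw [key, hfw 0 0]
  have h00 : (1 + (0:ℝ) ^ 2 / (mstar * (mstar - 1)) + 0 ^ 2 / (nstar * (nstar - 1))
        + 2 * 0 * 0 / (mstar * nstar)
        - (2 * mstar - 1) * 0 / (mstar * (mstar - 1))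
        - (2 * nstar - 1) * 0 / (nstar * (nstar - 1))) = 1 := by ring
  rw [h00, show (mstar - 0 + 0) * (nstar + 0 - 0) * (mstar - 0 + 0 - 1) * (nstar + 0 - 0 - 1)
      = mstar * nstar * (mstar - 1) * (nstar - 1) from by ring]
  rw [div_lt_div_iff_of_pos_right (Real.sqrt_pos.mpr hD2pos)]
  have h1 : 1 - 2 / nstar < 1 := by
    have : 0 < 2 / nstar := by positivity
    linarith
  have h2 : 1 - 2 / (mstar + 1) < 1 := by
    have : 0 < 2 / (mstar + 1) := by positivity
    linarith
  have hPQ1 : (1 - 2 / nstar) * (1 - 2 / (mstar + 1)) < 1 := by nlinarith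
  calc Real.sqrt ((1 - 2 / nstar) * (1 - 2 / (mstar + 1)))
      < Real.sqrt 1 := Real.sqrt_lt_sqrt hPQ0 hPQ1
    _ = 1 := Real.sqrt_one
end

section
/- Let m*, n* and N be real numbers with m* > 1, n* > 1 and N = m* + n*. For real Δ1, Δ2, set m = m* − Δ1 + Δ2 and n = n* + Δ1 − Δ2, and define f_w(Δ1, Δ2) = (1 + Δ1²/(m*(m* − 1)) + Δ2²/(n*(n* − 1)) + 2Δ1Δ2/(m*·n*) − (2m* − 1)Δ1/(m*(m* − 1)) − (2n* − 1)Δ2/(n*(n* − 1)))/√(m·n·(m − 1)·(n − 1)). Then for every (Δ1, Δ2) with 0 ≤ Δ1 ≤ m* − 1, 0 ≤ Δ2 ≤ n* − 1, m − 1 > 0 and n − 1 > 0, one has f_w(Δ1, Δ2) ≤ f_w(0, 0) = 1/√(m*·n*·(m* − 1)·(n* − 1)). -/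
/-- Main bound for the shape function `f_w` of the weighted statistic on the box
`[0, m*−1] × [0, n*−1]` (where `m − 1, n − 1 > 0`):
`f_w(Δ1, Δ2) ≤ f_w(0, 0) = 1/√(m*·n*·(m*−1)·(n*−1))`. -/
theorem fw_box_bound
    (mstar nstar N : ℝ) (hm : 1 < mstar) (hn : 1 < nstar) (hN : N = mstar + nstar)
    (fw : ℝ → ℝ → ℝ)
    (hfw : ∀ Δ1 Δ2 : ℝ, fw Δ1 Δ2 =
      (1 + Δ1 ^ 2 / (mstar * (mstar - 1)) + Δ2 ^ 2 / (nstar * (nstar - 1))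
        + 2 * Δ1 * Δ2 / (mstar * nstar)
        - (2 * mstar - 1) * Δ1 / (mstar * (mstar - 1))
        - (2 * nstar - 1) * Δ2 / (nstar * (nstar - 1))) /
        Real.sqrt ((mstar - Δ1 + Δ2) * (nstar + Δ1 - Δ2) *
          (mstar - Δ1 + Δ2 - 1) * (nstar + Δ1 - Δ2 - 1))) :
    (∀ Δ1 Δ2 : ℝ, 0 ≤ Δ1 → Δ1 ≤ mstar - 1 → 0 ≤ Δ2 → Δ2 ≤ nstar - 1 →
      0 < mstar - Δ1 + Δ2 - 1 → 0 < nstar + Δ1 - Δ2 - 1 →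
      fw Δ1 Δ2 ≤ fw 0 0)
    ∧ fw 0 0 = 1 / Real.sqrt (mstar * nstar * (mstar - 1) * (nstar - 1)) := by
  have ha0 : (0:ℝ) < mstar := lt_trans one_pos hm
  have hb0 : (0:ℝ) < nstar := lt_trans one_pos hn
  have ha1 : (0:ℝ) < mstar - 1 := by linarith
  have hb1 : (0:ℝ) < nstar - 1 := by linarith
  have hSstar : (0:ℝ) < mstar * nstar * (mstar - 1) * (nstar - 1) := by positivity
  have h00 : fw 0 0 = 1 / Real.sqrt (mstar * nstar * (mstar - 1) * (nstar - 1)) := by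
    rw [hfw]
    norm_num
  refine ⟨?_, h00⟩
  intro Δ1 Δ2 hu0 hu1 hv0 hv1 hm1 hn1
  rw [hfw, h00]
  obtain ⟨m, hmdef⟩ : ∃ m : ℝ, m = mstar - Δ1 + Δ2 := ⟨_, rfl⟩
  obtain ⟨n, hndef⟩ : ∃ n : ℝ, n = nstar + Δ1 - Δ2 := ⟨_, rfl⟩
  rw [← hmdef, ← hndef]
  have hmpos : (0:ℝ) < m := by linarith
  have hnpos : (0:ℝ) < n := by linarith
  have hS : (0:ℝ) < m * n * (m - 1) * (n - 1) :=
    mul_pos (mul_pos (mul_pos hmpos hnpos) (by linarith)) (by linarith)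
  obtain ⟨P, hPdef⟩ : ∃ P : ℝ, P = 1 + Δ1 ^ 2 / (mstar * (mstar - 1))
        + Δ2 ^ 2 / (nstar * (nstar - 1))
        + 2 * Δ1 * Δ2 / (mstar * nstar)
        - (2 * mstar - 1) * Δ1 / (mstar * (mstar - 1))
        - (2 * nstar - 1) * Δ2 / (nstar * (nstar - 1)) := ⟨_, rfl⟩
  rw [← hPdef]
  obtain ⟨X, hXdef⟩ : ∃ X : ℝ, X = mstar * nstar - nstar * Δ1 - mstar * Δ2 := ⟨_, rfl⟩
  obtain ⟨Y, hYdef⟩ : ∃ Y : ℝ, Y =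
      (mstar - 1) * (nstar - 1) - (nstar - 1) * Δ1 - (mstar - 1) * Δ2 := ⟨_, rfl⟩
  have hsqS : (0:ℝ) < Real.sqrt (m * n * (m - 1) * (n - 1)) := Real.sqrt_pos.mpr hS
  have hsqSs : (0:ℝ) < Real.sqrt (mstar * nstar * (mstar - 1) * (nstar - 1)) :=
    Real.sqrt_pos.mpr hSstar
  rw [div_le_div_iff₀ hsqS hsqSs, one_mul]
  -- key: P * sqrt(Sstar) ≤ sqrt(S)
  rcases le_or_gt P 0 with hP | hP
  · calc P * Real.sqrt (mstar * nstar * (mstar - 1) * (nstar - 1)) ≤ 0 :=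
        mul_nonpos_of_nonpos_of_nonneg hP (Real.sqrt_nonneg _)
    _ ≤ _ := Real.sqrt_nonneg _
  · -- P > 0 case
    have hPQ : P * (mstar * nstar * (mstar - 1) * (nstar - 1)) ≤ X * Y := by
      have hclear : P * (mstar * nstar * (mstar - 1) * (nstar - 1)) =
          X * Y - Δ1 * Δ2 * (mstar + nstar - 2) := by
        rw [hPdef, hXdef, hYdef]
        field_simp
        ring
      linarith [mul_nonneg (mul_nonneg hu0 hv0) (by linarith : (0:ℝ) ≤ mstar + nstar - 2)]
    have hX2 : X ^ 2 ≤ mstar * nstar * (m * n) := by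
      have hid : mstar * nstar * (m * n) - X ^ 2 =
          (mstar + nstar) * (nstar * Δ1 * (mstar - Δ1) + mstar * Δ2 * (nstar - Δ2)) := by
        rw [hXdef, hmdef, hndef]; ring
      have h1 := mul_nonneg (mul_nonneg hb0.le hu0) (by linarith : (0:ℝ) ≤ mstar - Δ1)
      have h2 := mul_nonneg (mul_nonneg ha0.le hv0) (by linarith : (0:ℝ) ≤ nstar - Δ2)
      linarith [mul_nonneg (by linarith : (0:ℝ) ≤ mstar + nstar) (add_nonneg h1 h2)]
    have hY2 : Y ^ 2 ≤ (mstar - 1) * (nstar - 1) * ((m - 1) * (n - 1)) := by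
      have hid : (mstar - 1) * (nstar - 1) * ((m - 1) * (n - 1)) - Y ^ 2 =
          (mstar + nstar - 2) * ((nstar - 1) * Δ1 * (mstar - 1 - Δ1)
            + (mstar - 1) * Δ2 * (nstar - 1 - Δ2)) := by
        rw [hYdef, hmdef, hndef]; ring
      have h1 := mul_nonneg (mul_nonneg hb1.le hu0) (by linarith : (0:ℝ) ≤ mstar - 1 - Δ1)
      have h2 := mul_nonneg (mul_nonneg ha1.le hv0) (by linarith : (0:ℝ) ≤ nstar - 1 - Δ2)
      linarith [mul_nonneg (by linarith : (0:ℝ) ≤ mstar + nstar - 2) (add_nonneg h1 h2)]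
    have hPS : 0 ≤ P * (mstar * nstar * (mstar - 1) * (nstar - 1)) :=
      mul_nonneg hP.le hSstar.le
    have hsq1 : (P * (mstar * nstar * (mstar - 1) * (nstar - 1))) ^ 2 ≤ (X * Y) ^ 2 :=
      pow_le_pow_left₀ hPS hPQ 2
    have hsq2 : (X * Y) ^ 2 ≤ (mstar * nstar * (m * n)) *
        ((mstar - 1) * (nstar - 1) * ((m - 1) * (n - 1))) := by
      calc (X * Y) ^ 2 = X ^ 2 * Y ^ 2 := by ring
      _ ≤ _ := mul_le_mul hX2 hY2 (sq_nonneg Y) (by positivity)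
    have hkey2 : P ^ 2 * (mstar * nstar * (mstar - 1) * (nstar - 1)) ≤
        m * n * (m - 1) * (n - 1) := by
      have h3 : (P ^ 2 * (mstar * nstar * (mstar - 1) * (nstar - 1))) *
          (mstar * nstar * (mstar - 1) * (nstar - 1)) ≤
          (m * n * (m - 1) * (n - 1)) * (mstar * nstar * (mstar - 1) * (nstar - 1)) := by
        calc (P ^ 2 * (mstar * nstar * (mstar - 1) * (nstar - 1))) *
            (mstar * nstar * (mstar - 1) * (nstar - 1))
            = (P * (mstar * nstar * (mstar - 1) * (nstar - 1))) ^ 2 := by ring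
        _ ≤ (X * Y) ^ 2 := hsq1
        _ ≤ (mstar * nstar * (m * n)) *
            ((mstar - 1) * (nstar - 1) * ((m - 1) * (n - 1))) := hsq2
        _ = (m * n * (m - 1) * (n - 1)) * (mstar * nstar * (mstar - 1) * (nstar - 1)) := by
            ring
      exact le_of_mul_le_mul_right h3 hSstar
    -- conclude via squares
    have hnn : 0 ≤ P * Real.sqrt (mstar * nstar * (mstar - 1) * (nstar - 1)) :=
      mul_nonneg hP.le (Real.sqrt_nonneg _)
    rw [show P * Real.sqrt (mstar * nstar * (mstar - 1) * (nstar - 1)) =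
        Real.sqrt (P ^ 2 * (mstar * nstar * (mstar - 1) * (nstar - 1))) by
      rw [Real.sqrt_mul (sq_nonneg P), Real.sqrt_sq hP.le]]
    exact Real.sqrt_le_sqrt hkey2
end

section
/- Let m*, n* and N be real numbers with m* > 1, n* > 1, N = m* + n* and N > 2. For real Δ1, Δ2, set m = m* − Δ1 + Δ2 and n = n* + Δ1 − Δ2, and let k > 0, p11, p22 be real with p12 = 1 − p11 and p21 = 1 − p22. Define ER1 = p11·k·m*·(m*−Δ1)(m*−Δ1−1)/(m*(m*−1)) + p12·k·m*·(m*−Δ1)Δ2/(m*·n*) + p21·k·n*·(m*−Δ1)Δ2/(m*·n*) + p22·k·n*·Δ2(Δ2−1)/(n*(n*−1)) and ER2 = p22·k·n*·(n*−Δ2)(n*−Δ2−1)/(n*(n*−1)) + p21·k·n*·(n*−Δ2)Δ1/(n*·m*) + p12·k·m*·(n*−Δ2)Δ1/(n*·m*) + p11·k·m*·Δ1(Δ1−1)/(m*(m*−1)). Then ((n − 1)·ER1 + (m − 1)·ER2)/(N − 2) − (m − 1)(n − 1)kN/((N − 1)(N − 2)) = k·((m*(n* − 1)p11 + n*(m*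 − 1)p22 − (m* − 1)(n* − 1)N/(N − 1))/(N − 2))·(1 + Δ1²/(m*(m* − 1)) + Δ2²/(n*(n* − 1)) + 2Δ1Δ2/(m*·n*) − (2m* − 1)Δ1/(m*(m* − 1)) − (2n* − 1)Δ2/(n*(n* − 1))). -/
/-- Factorization identity for `E₂(R_w(x)) − μ_w(x)` in the proof of Theorem 1:
`((n−1)·ER1 + (m−1)·ER2)/(N−2) − (m−1)(n−1)kN/((N−1)(N−2))` equals
`k·((m*(n*−1)p11 + n*(m*−1)p22 − (m*−1)(n*−1)N/(N−1))/(N−2))` times the quadratic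
shape polynomial in `(Δ1, Δ2)`. -/
theorem Ew_factorization
    (mstar nstar N : ℝ) (hm : 1 < mstar) (hn : 1 < nstar) (hN : N = mstar + nstar)
    (hN2 : 2 < N)
    (Δ1 Δ2 m n k p11 p22 p12 p21 ER1 ER2 : ℝ)
    (hmdef : m = mstar - Δ1 + Δ2) (hndef : n = nstar + Δ1 - Δ2)
    (hk : 0 < k) (hp12 : p12 = 1 - p11) (hp21 : p21 = 1 - p22)
    (hER1 : ER1 =
        p11 * k * mstar * ((mstar - Δ1) * (mstar - Δ1 - 1)) / (mstar * (mstar - 1))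
      + p12 * k * mstar * ((mstar - Δ1) * Δ2) / (mstar * nstar)
      + p21 * k * nstar * ((mstar - Δ1) * Δ2) / (mstar * nstar)
      + p22 * k * nstar * (Δ2 * (Δ2 - 1)) / (nstar * (nstar - 1)))
    (hER2 : ER2 =
        p22 * k * nstar * ((nstar - Δ2) * (nstar - Δ2 - 1)) / (nstar * (nstar - 1))
      + p21 * k * nstar * ((nstar - Δ2) * Δ1) / (nstar * mstar)
      + p12 * k * mstar * ((nstar - Δ2) * Δ1) / (nstar * mstar)
      + p11 * k * mstar * (Δ1 * (Δ1 - 1)) / (mstar * (mstar - 1))) :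
    ((n - 1) * ER1 + (m - 1) * ER2) / (N - 2)
        - (m - 1) * (n - 1) * k * N / ((N - 1) * (N - 2)) =
      k * ((mstar * (nstar - 1) * p11 + nstar * (mstar - 1) * p22
            - (mstar - 1) * (nstar - 1) * N / (N - 1)) / (N - 2)) *
        (1 + Δ1 ^ 2 / (mstar * (mstar - 1)) + Δ2 ^ 2 / (nstar * (nstar - 1))
          + 2 * Δ1 * Δ2 / (mstar * nstar)
          - (2 * mstar - 1) * Δ1 / (mstar * (mstar - 1))
          - (2 * nstar - 1) * Δ2 / (nstar * (nstar - 1))) := by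
  subst hN hp12 hp21 hmdef hndef hER1 hER2
  have h1 : mstar ≠ 0 := by linarith
  have h2 : mstar - 1 ≠ 0 := by linarith
  have h3 : nstar ≠ 0 := by linarith
  have h4 : nstar - 1 ≠ 0 := by linarith
  have h5 : mstar + nstar - 1 ≠ 0 := by linarith
  have h6 : mstar + nstar - 2 ≠ 0 := by linarith
  field_simp
  ring
end

section
/- Let m* and n* be integers with m* ≥ 2 and n* ≥ 2, set N = m* + n*, and let p11, p22 be real numbers with p11 > (m* − 1)/(N − 1) and p22 > (n* − 1)/(N − 1). For integers Δ1, Δ2 with 0 ≤ Δ1 ≤ m* and 0 ≤ Δ2 ≤ n*, set m = m* − Δ1 + Δ2 and n = n* + Δ1 − Δ2, and define f_w(Δ1, Δ2) = (1 + Δ1²/(m*(m* − 1)) + Δ2²/(n*(n* − 1)) + 2Δ1Δ2/(m*·n*) − (2m* − 1)Δ1/(m*(m* − 1)) − (2n* − 1)Δ2/(n*(n* − 1)))/√(m·n·(m − 1)·(n − 1)). Then for every such (Δ1, Δ2) with m ≥ 2 and n ≥ 2, (m*(n* − 1)p11 + n*(m* − 1)p22 − (m* − 1)(n* − 1)N/(N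 − 1))·f_w(Δ1, Δ2) ≤ (m*(n* − 1)p11 + n*(m* − 1)p22 − (m* − 1)(n* − 1)N/(N − 1))·f_w(0, 0), and moreover f_w(m*, n*) = f_w(0, 0). -/
private lemma quad_bound {g vL vU r t L U al : ℝ} (hal : 0 ≤ al)
    (hLt : L ≤ t) (htU : t ≤ U)
    (hid : (U - L) * g = (U - t) * vL + (t - L) * vU - al * (t - L) * (U - t) * (U - L))
    (h1 : vL ≤ r) (h2 : vU ≤ r) (heq : t = L → g = vL) : g ≤ r := by
  rcases eq_or_lt_of_le (hLt.trans htU) with h | h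
  · have ht : t = L := le_antisymm (h ▸ htU) hLt
    rw [heq ht]; exact h1
  · have h3 : (U - L) * g ≤ (U - L) * r := by
      nlinarith [mul_le_mul_of_nonneg_left h1 (sub_nonneg.2 htU),
        mul_le_mul_of_nonneg_left h2 (sub_nonneg.2 hLt),
        mul_nonneg (mul_nonneg (mul_nonneg hal (sub_nonneg.2 hLt)) (sub_nonneg.2 htU))
          (le_of_lt (sub_pos.2 h))]
    exact le_of_mul_le_mul_left h3 (sub_pos.2 h)

private lemma le_sqrt_of_sq_le {v P : ℝ} (hv : 0 ≤ v) (h : v * v ≤ P) : v ≤ Real.sqrt P := by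
  have := Real.sqrt_le_sqrt h
  rwa [Real.sqrt_mul_self hv] at this

private lemma pmono {p q : ℝ} (hp : 1 ≤ p) (hpq : p ≤ q) : p * (p - 1) ≤ q * (q - 1) := by
  nlinarith [mul_nonneg (sub_nonneg.2 hpq) (by linarith : (0:ℝ) ≤ q + p - 1)]

private lemma key (A B x y : ℝ) (hA : 2 ≤ A) (hB : 2 ≤ B)
    (hx0 : 0 ≤ x) (hxA : x ≤ A) (hy0 : 0 ≤ y) (hyB : y ≤ B)
    (hm2 : 2 ≤ A - x + y) (hn2 : 2 ≤ B + x - y) :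
    A * (A - 1) * B * (B - 1) + B * (B - 1) * x ^ 2 + A * (A - 1) * y ^ 2
      + 2 * (A - 1) * (B - 1) * x * y - (2 * A - 1) * B * (B - 1) * x
      - (2 * B - 1) * A * (A - 1) * y ≤
    Real.sqrt (A * B * (A - 1) * (B - 1)) *
      Real.sqrt ((A - x + y) * (B + x - y) * (A - x + y - 1) * (B + x - y - 1)) := by
  obtain ⟨m, hmdef⟩ : ∃ t : ℝ, t = A - x + y := ⟨_, rfl⟩
  obtain ⟨n, hndef⟩ : ∃ t : ℝ, t = B + x - y := ⟨_, rfl⟩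
  have hm : 2 ≤ m := by rw [hmdef]; exact hm2
  have hn : 2 ≤ n := by rw [hndef]; exact hn2
  have hD0 : (0:ℝ) ≤ A * B * (A - 1) * (B - 1) := by
    have := mul_nonneg (mul_nonneg (mul_nonneg (by linarith : (0:ℝ) ≤ A)
      (by linarith : (0:ℝ) ≤ B)) (by linarith : (0:ℝ) ≤ A - 1)) (by linarith : (0:ℝ) ≤ B - 1)
    linarith
  rw [show (A - x + y) * (B + x - y) * (A - x + y - 1) * (B + x - y - 1)
      = m * n * (m - 1) * (n - 1) by rw [hmdef, hndef],
    ← Real.sqrt_mul hD0]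
  have hAA : (0:ℝ) ≤ A * (A - 1) := by nlinarith
  have hBB : (0:ℝ) ≤ B * (B - 1) := by nlinarith
  have hmm : (0:ℝ) ≤ m * (m - 1) := by nlinarith
  have hnn : (0:ℝ) ≤ n * (n - 1) := by nlinarith
  have hal : (0:ℝ) ≤ B * (B - 1) + A * (A - 1) + 2 * (A - 1) * (B - 1) := by nlinarith
  rcases le_total x y with hxy | hxy
  · -- x ≤ y : m ≥ A, n ≤ B
    have hvL : A * (A - 1) * (n * (n - 1)) ≤
        Real.sqrt (A * B * (A - 1) * (B - 1) * (m * n * (m - 1) * (n - 1))) := by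
      apply le_sqrt_of_sq_le (mul_nonneg hAA hnn)
      have h1 : A * (A - 1) ≤ m * (m - 1) := pmono (by linarith) (by rw [hmdef]; linarith)
      have h2 : n * (n - 1) ≤ B * (B - 1) := pmono (by linarith) (by rw [hndef]; linarith)
      have h3 : A * (A - 1) * (n * (n - 1)) ≤ m * (m - 1) * (B * (B - 1)) :=
        mul_le_mul h1 h2 hnn (hAA.trans h1)
      exact (mul_le_mul_of_nonneg_left h3 (mul_nonneg hAA hnn)).trans_eq (by ring)
    rcases le_total m B with hc | hc
    · -- subcase 1a : U = A, vU = A(A-1) m(m-1)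
      have hvU : A * (A - 1) * (m * (m - 1)) ≤
          Real.sqrt (A * B * (A - 1) * (B - 1) * (m * n * (m - 1) * (n - 1))) := by
        apply le_sqrt_of_sq_le (mul_nonneg hAA hmm)
        have h1 : A * (A - 1) ≤ n * (n - 1) := pmono (by linarith) (by rw [hndef]; linarith [hmdef ▸ hc])
        have h2 : m * (m - 1) ≤ B * (B - 1) := pmono (by linarith) hc
        have h3 : A * (A - 1) * (m * (m - 1)) ≤ n * (n - 1) * (B * (B - 1)) :=
          mul_le_mul h1 h2 hmm (hAA.trans h1)
        exact (mul_le_mul_of_nonneg_left h3 (mul_nonneg hAA hmm)).trans_eq (by ring)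
      refine quad_bound hal hx0 hxA ?_ hvL hvU ?_
      · subst hmdef; subst hndef; ring
      · intro h; subst hmdef; subst hndef; subst h; ring
    · -- subcase 1b : U = B + x - y, vU = B(B-1) n(n-1)
      have hvU : B * (B - 1) * (n * (n - 1)) ≤
          Real.sqrt (A * B * (A - 1) * (B - 1) * (m * n * (m - 1) * (n - 1))) := by
        apply le_sqrt_of_sq_le (mul_nonneg hBB hnn)
        have h1 : B * (B - 1) ≤ m * (m - 1) := pmono (by linarith) (by rw [hmdef]; linarith [hmdef ▸ hc])
        have h2 : n * (n - 1) ≤ A * (A - 1) := pmono (by linarith) (by rw [hndef]; linarith [hmdef ▸ hc])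
        have h3 : B * (B - 1) * (n * (n - 1)) ≤ m * (m - 1) * (A * (A - 1)) :=
          mul_le_mul h1 h2 hnn (hBB.trans h1)
        exact (mul_le_mul_of_nonneg_left h3 (mul_nonneg hBB hnn)).trans_eq (by ring)
      refine quad_bound hal hx0 (by linarith : x ≤ B + x - y) ?_ hvL hvU ?_
      · subst hmdef; subst hndef; ring
      · intro h; subst hmdef; subst hndef; subst h; ring
  · -- y ≤ x : m ≤ A, n ≥ B
    have hvL : B * (B - 1) * (m * (m - 1)) ≤
        Real.sqrt (A * B * (A - 1) * (B - 1) * (m * n * (m - 1) * (n - 1))) := by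
      apply le_sqrt_of_sq_le (mul_nonneg hBB hmm)
      have h1 : B * (B - 1) ≤ n * (n - 1) := pmono (by linarith) (by rw [hndef]; linarith)
      have h2 : m * (m - 1) ≤ A * (A - 1) := pmono (by linarith) (by rw [hmdef]; linarith)
      have h3 : B * (B - 1) * (m * (m - 1)) ≤ n * (n - 1) * (A * (A - 1)) :=
        mul_le_mul h1 h2 hmm (hBB.trans h1)
      exact (mul_le_mul_of_nonneg_left h3 (mul_nonneg hBB hmm)).trans_eq (by ring)
    rcases le_total n A with hc | hc
    · -- subcase 2a : U = B + x - y, vU = B(B-1) n(n-1)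
      have hvU : B * (B - 1) * (n * (n - 1)) ≤
          Real.sqrt (A * B * (A - 1) * (B - 1) * (m * n * (m - 1) * (n - 1))) := by
        apply le_sqrt_of_sq_le (mul_nonneg hBB hnn)
        have h1 : B * (B - 1) ≤ m * (m - 1) := pmono (by linarith) (by rw [hmdef]; linarith [hndef ▸ hc])
        have h2 : n * (n - 1) ≤ A * (A - 1) := pmono (by linarith) hc
        have h3 : B * (B - 1) * (n * (n - 1)) ≤ m * (m - 1) * (A * (A - 1)) :=
          mul_le_mul h1 h2 hnn (hBB.trans h1)
        exact (mul_le_mul_of_nonneg_left h3 (mul_nonneg hBB hnn)).trans_eq (by ring)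
      refine quad_bound hal (by linarith : x - y ≤ x) (by linarith : x ≤ B + x - y) ?_ hvL hvU ?_
      · subst hmdef; subst hndef; ring
      · intro h
        have hy : y = 0 := by linarith
        subst hmdef; subst hndef; subst hy; ring
    · -- subcase 2b : U = A, vU = A(A-1) m(m-1)
      have hvU : A * (A - 1) * (m * (m - 1)) ≤
          Real.sqrt (A * B * (A - 1) * (B - 1) * (m * n * (m - 1) * (n - 1))) := by
        apply le_sqrt_of_sq_le (mul_nonneg hAA hmm)
        have h1 : A * (A - 1) ≤ n * (n - 1) := pmono (by linarith) hc
        have h2 : m * (m - 1) ≤ B * (B - 1) := pmono (by linarith) (by rw [hmdef]; linarith [hndef ▸ hc])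
        have h3 : A * (A - 1) * (m * (m - 1)) ≤ n * (n - 1) * (B * (B - 1)) :=
          mul_le_mul h1 h2 hmm (hAA.trans h1)
        exact (mul_le_mul_of_nonneg_left h3 (mul_nonneg hAA hmm)).trans_eq (by ring)
      refine quad_bound hal (by linarith : x - y ≤ x) hxA ?_ hvL hvU ?_
      · subst hmdef; subst hndef; ring
      · intro h
        have hy : y = 0 := by linarith
        subst hmdef; subst hndef; subst hy; ring

set_option maxHeartbeats 1000000 in
/-- Scenario (1) of Theorem 1: for integer cluster sizes `m*, n* ≥ 2` and
`p11 > (m*−1)/(N−1)`, `p22 > (n*−1)/(N−1)`, the quantity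
`(m*(n*−1)p11 + n*(m*−1)p22 − (m*−1)(n*−1)N/(N−1))·f_w(Δ1, Δ2)` is maximized over
integer `(Δ1, Δ2)` in `[0, m*] × [0, n*]` with `m ≥ 2`, `n ≥ 2` at `(0, 0)`;
moreover `f_w(m*, n*) = f_w(0, 0)`, so the maximum is attained at both the true
labeling `x*` and the flipped labeling `1 − x*`. -/
theorem Zw_maximized_at_true_or_flipped_labeling
    (mstar nstar N : ℤ) (hm : 2 ≤ mstar) (hn : 2 ≤ nstar) (hN : N = mstar + nstar)
    (p11 p22 : ℝ)
    (h11 : p11 > ((mstar : ℝ) - 1) / ((N : ℝ) - 1))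
    (h22 : p22 > ((nstar : ℝ) - 1) / ((N : ℝ) - 1))
    (fw : ℤ → ℤ → ℝ)
    (hfw : ∀ Δ1 Δ2 : ℤ, fw Δ1 Δ2 =
      (1 + (Δ1 : ℝ) ^ 2 / ((mstar : ℝ) * ((mstar : ℝ) - 1))
        + (Δ2 : ℝ) ^ 2 / ((nstar : ℝ) * ((nstar : ℝ) - 1))
        + 2 * (Δ1 : ℝ) * (Δ2 : ℝ) / ((mstar : ℝ) * (nstar : ℝ))
        - (2 * (mstar : ℝ) - 1) * (Δ1 : ℝ) / ((mstar : ℝ) * ((mstar : ℝ) - 1))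
        - (2 * (nstar : ℝ) - 1) * (Δ2 : ℝ) / ((nstar : ℝ) * ((nstar : ℝ) - 1))) /
        Real.sqrt (((mstar : ℝ) - (Δ1 : ℝ) + (Δ2 : ℝ)) * ((nstar : ℝ) + (Δ1 : ℝ) - (Δ2 : ℝ)) *
          ((mstar : ℝ) - (Δ1 : ℝ) + (Δ2 : ℝ) - 1) * ((nstar : ℝ) + (Δ1 : ℝ) - (Δ2 : ℝ) - 1))) :
    (∀ Δ1 Δ2 : ℤ, 0 ≤ Δ1 → Δ1 ≤ mstar → 0 ≤ Δ2 → Δ2 ≤ nstar →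
      2 ≤ mstar - Δ1 + Δ2 → 2 ≤ nstar + Δ1 - Δ2 →
      ((mstar : ℝ) * ((nstar : ℝ) - 1) * p11 + (nstar : ℝ) * ((mstar : ℝ) - 1) * p22
          - ((mstar : ℝ) - 1) * ((nstar : ℝ) - 1) * (N : ℝ) / ((N : ℝ) - 1)) * fw Δ1 Δ2 ≤
        ((mstar : ℝ) * ((nstar : ℝ) - 1) * p11 + (nstar : ℝ) * ((mstar : ℝ) - 1) * p22
          - ((mstar : ℝ) - 1) * ((nstar : ℝ) - 1) * (N : ℝ) / ((N : ℝ) - 1)) * fw 0 0)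
    ∧ fw mstar nstar = fw 0 0 := by
  have hA : (2:ℝ) ≤ (mstar : ℝ) := by exact_mod_cast hm
  have hB : (2:ℝ) ≤ (nstar : ℝ) := by exact_mod_cast hn
  have hNr : (N : ℝ) = (mstar : ℝ) + (nstar : ℝ) := by rw [hN]; push_cast; ring
  have hA0 : (mstar : ℝ) ≠ 0 := by linarith
  have hB0 : (nstar : ℝ) ≠ 0 := by linarith
  have hA1 : (mstar : ℝ) - 1 ≠ 0 := by intro h; nlinarith
  have hB1 : (nstar : ℝ) - 1 ≠ 0 := by intro h; nlinarith
  have hD0pos : (0:ℝ) < (mstar : ℝ) * (nstar : ℝ) * ((mstar : ℝ) - 1) * ((nstar : ℝ) - 1) := by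
    have h1 : (0:ℝ) < (mstar : ℝ) := by linarith
    have h2 : (0:ℝ) < (nstar : ℝ) := by linarith
    have h3 : (0:ℝ) < (mstar : ℝ) - 1 := by linarith
    have h4 : (0:ℝ) < (nstar : ℝ) - 1 := by linarith
    positivity
  have hfw00 : fw 0 0 =
      1 / Real.sqrt ((mstar : ℝ) * (nstar : ℝ) * ((mstar : ℝ) - 1) * ((nstar : ℝ) - 1)) := by
    rw [hfw]; norm_num
  constructor
  · intro Δ1 Δ2 h10 h1m h20 h2n hm2 hn2
    have hC : 0 ≤ (mstar : ℝ) * ((nstar : ℝ) - 1) * p11 + (nstar : ℝ) * ((mstar : ℝ) - 1) * p22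
        - ((mstar : ℝ) - 1) * ((nstar : ℝ) - 1) * (N : ℝ) / ((N : ℝ) - 1) := by
      have hN1 : (0:ℝ) < (N : ℝ) - 1 := by rw [hNr]; linarith
      have h11' : (mstar : ℝ) - 1 ≤ p11 * ((N : ℝ) - 1) := ((div_lt_iff₀ hN1).1 h11).le
      have h22' : (nstar : ℝ) - 1 ≤ p22 * ((N : ℝ) - 1) := ((div_lt_iff₀ hN1).1 h22).le
      rw [sub_nonneg, div_le_iff₀ hN1]
      have k1 : (mstar : ℝ) * ((nstar : ℝ) - 1) * ((mstar : ℝ) - 1) ≤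
          (mstar : ℝ) * ((nstar : ℝ) - 1) * (p11 * ((N : ℝ) - 1)) :=
        mul_le_mul_of_nonneg_left h11' (by nlinarith)
      have k2 : (nstar : ℝ) * ((mstar : ℝ) - 1) * ((nstar : ℝ) - 1) ≤
          (nstar : ℝ) * ((mstar : ℝ) - 1) * (p22 * ((N : ℝ) - 1)) :=
        mul_le_mul_of_nonneg_left h22' (by nlinarith)
      rw [hNr] at k1 k2 ⊢
      nlinarith [k1, k2]
    have hfwle : fw Δ1 Δ2 ≤ fw 0 0 := by
      rw [hfw Δ1 Δ2, hfw00]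
      have hx0 : (0:ℝ) ≤ (Δ1 : ℝ) := by exact_mod_cast h10
      have hxA : (Δ1 : ℝ) ≤ (mstar : ℝ) := by exact_mod_cast h1m
      have hy0 : (0:ℝ) ≤ (Δ2 : ℝ) := by exact_mod_cast h20
      have hyB : (Δ2 : ℝ) ≤ (nstar : ℝ) := by exact_mod_cast h2n
      have hm2' : (2:ℝ) ≤ (mstar : ℝ) - (Δ1 : ℝ) + (Δ2 : ℝ) := by exact_mod_cast hm2
      have hn2' : (2:ℝ) ≤ (nstar : ℝ) + (Δ1 : ℝ) - (Δ2 : ℝ) := by exact_mod_cast hn2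
      have hDpos : (0:ℝ) < ((mstar : ℝ) - (Δ1 : ℝ) + (Δ2 : ℝ)) * ((nstar : ℝ) + (Δ1 : ℝ) - (Δ2 : ℝ)) *
          ((mstar : ℝ) - (Δ1 : ℝ) + (Δ2 : ℝ) - 1) * ((nstar : ℝ) + (Δ1 : ℝ) - (Δ2 : ℝ) - 1) := by
        have h1 : (0:ℝ) < (mstar : ℝ) - (Δ1 : ℝ) + (Δ2 : ℝ) := by linarith
        have h2 : (0:ℝ) < (nstar : ℝ) + (Δ1 : ℝ) - (Δ2 : ℝ) := by linarith
        have h3 : (0:ℝ) < (mstar : ℝ) - (Δ1 : ℝ) + (Δ2 : ℝ) - 1 := by linarith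
        have h4 : (0:ℝ) < (nstar : ℝ) + (Δ1 : ℝ) - (Δ2 : ℝ) - 1 := by linarith
        positivity
      have hsD : 0 < Real.sqrt (((mstar : ℝ) - (Δ1 : ℝ) + (Δ2 : ℝ)) * ((nstar : ℝ) + (Δ1 : ℝ) - (Δ2 : ℝ)) *
          ((mstar : ℝ) - (Δ1 : ℝ) + (Δ2 : ℝ) - 1) * ((nstar : ℝ) + (Δ1 : ℝ) - (Δ2 : ℝ) - 1)) :=
        Real.sqrt_pos.2 hDpos
      have hsD0 : 0 < Real.sqrt ((mstar : ℝ) * (nstar : ℝ) * ((mstar : ℝ) - 1) * ((nstar : ℝ) - 1)) :=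
        Real.sqrt_pos.2 hD0pos
      rw [div_le_div_iff₀ hsD hsD0, one_mul]
      have hnum : (1 + (Δ1 : ℝ) ^ 2 / ((mstar : ℝ) * ((mstar : ℝ) - 1))
          + (Δ2 : ℝ) ^ 2 / ((nstar : ℝ) * ((nstar : ℝ) - 1))
          + 2 * (Δ1 : ℝ) * (Δ2 : ℝ) / ((mstar : ℝ) * (nstar : ℝ))
          - (2 * (mstar : ℝ) - 1) * (Δ1 : ℝ) / ((mstar : ℝ) * ((mstar : ℝ) - 1))
          - (2 * (nstar : ℝ) - 1) * (Δ2 : ℝ) / ((nstar : ℝ) * ((nstar : ℝ) - 1))) =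
          ((mstar : ℝ) * ((mstar : ℝ) - 1) * (nstar : ℝ) * ((nstar : ℝ) - 1)
            + (nstar : ℝ) * ((nstar : ℝ) - 1) * (Δ1 : ℝ) ^ 2
            + (mstar : ℝ) * ((mstar : ℝ) - 1) * (Δ2 : ℝ) ^ 2
            + 2 * ((mstar : ℝ) - 1) * ((nstar : ℝ) - 1) * (Δ1 : ℝ) * (Δ2 : ℝ)
            - (2 * (mstar : ℝ) - 1) * (nstar : ℝ) * ((nstar : ℝ) - 1) * (Δ1 : ℝ)
            - (2 * (nstar : ℝ) - 1) * (mstar : ℝ) * ((mstar : ℝ) - 1) * (Δ2 : ℝ)) /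
            ((mstar : ℝ) * (nstar : ℝ) * ((mstar : ℝ) - 1) * ((nstar : ℝ) - 1)) := by
        field_simp
      rw [hnum, div_mul_eq_mul_div, div_le_iff₀ hD0pos]
      have hkey := key (mstar : ℝ) (nstar : ℝ) (Δ1 : ℝ) (Δ2 : ℝ) hA hB hx0 hxA hy0 hyB hm2' hn2'
      have hs0 : Real.sqrt ((mstar : ℝ) * (nstar : ℝ) * ((mstar : ℝ) - 1) * ((nstar : ℝ) - 1)) *
          Real.sqrt ((mstar : ℝ) * (nstar : ℝ) * ((mstar : ℝ) - 1) * ((nstar : ℝ) - 1)) =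
          (mstar : ℝ) * (nstar : ℝ) * ((mstar : ℝ) - 1) * ((nstar : ℝ) - 1) :=
        Real.mul_self_sqrt hD0pos.le
      have hstep := mul_le_mul_of_nonneg_right hkey
        (Real.sqrt_nonneg ((mstar : ℝ) * (nstar : ℝ) * ((mstar : ℝ) - 1) * ((nstar : ℝ) - 1)))
      obtain ⟨s0, hs0def⟩ : ∃ t, t = Real.sqrt ((mstar : ℝ) * (nstar : ℝ) * ((mstar : ℝ) - 1) *
        ((nstar : ℝ) - 1)) := ⟨_, rfl⟩
      obtain ⟨s1, hs1def⟩ : ∃ t, t = Real.sqrt (((mstar : ℝ) - (Δ1 : ℝ) + (Δ2 : ℝ)) *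
        ((nstar : ℝ) + (Δ1 : ℝ) - (Δ2 : ℝ)) * ((mstar : ℝ) - (Δ1 : ℝ) + (Δ2 : ℝ) - 1) *
        ((nstar : ℝ) + (Δ1 : ℝ) - (Δ2 : ℝ) - 1)) := ⟨_, rfl⟩
      rw [← hs0def, ← hs1def] at hstep ⊢
      rw [← hs0def] at hs0
      refine hstep.trans (le_of_eq ?_)
      rw [← hs0]; ring
    exact mul_le_mul_of_nonneg_left hfwle hC
  · rw [hfw mstar nstar, hfw00]
    rw [show ((mstar : ℝ) - (mstar : ℝ) + (nstar : ℝ)) * ((nstar : ℝ) + (mstar : ℝ) - (nstar : ℝ)) *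
        ((mstar : ℝ) - (mstar : ℝ) + (nstar : ℝ) - 1) * ((nstar : ℝ) + (mstar : ℝ) - (nstar : ℝ) - 1) =
        (mstar : ℝ) * (nstar : ℝ) * ((mstar : ℝ) - 1) * ((nstar : ℝ) - 1) from by ring]
    congr 1
    field_simp
    ring
end
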